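/- Complexity of pairs: there exists a constant c such that K(x, y) ≤ K(x) + 2·log₂(K(x) + 1) + K(y) + c for all binary strings x and y. -/

import Mathlib

/-!
Concatenate a shortest description `p` of `x` with a shortest description `q` of `y`, preceded by
a self-delimiting encoding of `|p|` of length `2 log₂(|p| + 1) + O(1)`. A decompressor that splits
such a string and runs `U` on both halves is computable, so optimality of `U` transfers the bound
to `K`.
-/

/-- Plain Kolmogorov complexity of `x` with respect to decompressor `D`. -/
noncomputable def Kc (D : List Bool →. List Bool) (x : List Bool) : ℕ∞ :=
  sInf {n : ℕ∞ | ∃ p : List Bool, x ∈ D p ∧ (p.length : ℕ∞) = n}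

/-- `U` is an optimal decompressor. -/
def OptimalDecompressor (U : List Bool →. List Bool) : Prop :=
  Partrec U ∧ ∀ D : List Bool →. List Bool, Partrec D →
    ∃ c : ℕ, ∀ x : List Bool, Kc U x ≤ Kc D x + (c : ℕ∞)

section Kc

variable {D : List Bool →. List Bool} {x p : List Bool}

theorem Kc_le_length (h : x ∈ D p) : Kc D x ≤ p.length :=
  sInf_le ⟨p, h, rfl⟩

theorem exists_mem_length_eq_Kc (h : Kc D x ≠ ⊤) :
    ∃ p, x ∈ D p ∧ (p.length : ℕ∞) = Kc D x := by
  have hne : {n : ℕ∞ | ∃ p, x ∈ D p ∧ (p.length : ℕ∞) = n}.Nonempty :=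
    Set.nonempty_iff_ne_empty.2 fun he => h (by rw [Kc, he, sInf_empty])
  exact csInf_mem hne

theorem OptimalDecompressor.Kc_ne_top {U : List Bool →. List Bool} (hU : OptimalDecompressor U)
    (x : List Bool) : Kc U x ≠ ⊤ := by
  obtain ⟨c, hc⟩ := hU.2 Part.some Computable.id.partrec
  refine ne_top_of_le_ne_top ?_
    ((hc x).trans (add_le_add_left (Kc_le_length (Part.mem_some x)) _))
  simp

end Kc

def ofBits (l : List Bool) : ℕ :=
  l.foldr Nat.bit 0

theorem ofBits_bits (n : ℕ) : ofBits n.bits = n := by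
  induction n using Nat.binaryRec' with
  | zero => rfl
  | bit b n h ih => rw [Nat.bits_append_bit n b h, ofBits, List.foldr_cons, ← ofBits, ih]

theorem primrec_ofBits : Primrec ofBits := by
  have hbit : Primrec₂ Nat.bit := by
    refine (Primrec.cond Primrec.fst
      (Primrec.succ.comp (Primrec.nat_mul.comp (.const 2) .snd))
      (Primrec.nat_mul.comp (.const 2) .snd)).to₂.of_eq fun b n => ?_
    cases b <;> simp [Nat.bit_val]
  exact Primrec.list_foldr .id (.const 0)
    (hbit.comp (Primrec.fst.comp .snd) (Primrec.snd.comp .snd)).to₂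

/-- `p` is made self-delimiting by prefixing the number of binary digits of `|p|` in unary, then
`|p|` in binary; this costs `2 log₂(|p| + 1) + 3` bits. -/
def encodePair (p q : List Bool) : List Bool :=
  List.replicate p.length.size true ++ false :: (p.length.bits ++ p ++ q)

def decodePair (s : List Bool) : List Bool × List Bool :=
  let k := s.idxOf false
  let r := s.drop (k + 1)
  let n := ofBits (r.take k)
  let t := r.drop k
  (t.take n, t.drop n)

theorem decodePair_encodePair (p q : List Bool) : decodePair (encodePair p q) = (p, q) := by
  have hidx : (encodePair p q).idxOf false = p.length.size := by
    rw [encodePair, List.idxOf_append_of_notMem (by simp)]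
    simp
  have hdrop : (encodePair p q).drop (p.length.size + 1) = p.length.bits ++ p ++ q := by
    simp [encodePair, List.drop_append]
  have hbits := Nat.size_eq_bits_len p.length
  simp only [decodePair, hidx, hdrop, List.append_assoc, List.take_left' hbits,
    List.drop_left' hbits, ofBits_bits, List.take_left', List.drop_left']

theorem length_encodePair_le (p q : List Bool) :
    (encodePair p q).length ≤ p.length + q.length + 2 * Nat.log 2 (p.length + 1) + 3 := by
  have hsize : p.length.size ≤ Nat.log 2 (p.length + 1) + 1 :=
    Nat.size_le.2 ((Nat.lt_succ_self _).trans (Nat.lt_pow_succ_log_self (by norm_num) _))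
  simp [encodePair, Nat.size_eq_bits_len]
  omega

theorem primrec_decodePair : Primrec decodePair := by
  have hk : Primrec fun s : List Bool => s.idxOf false := Primrec.list_idxOf.comp (.const false) .id
  have hr : Primrec fun s : List Bool => s.drop (s.idxOf false + 1) :=
    Primrec.list_drop.comp (Primrec.succ.comp hk) .id
  have hn : Primrec fun s : List Bool =>
      ofBits ((s.drop (s.idxOf false + 1)).take (s.idxOf false)) :=
    primrec_ofBits.comp (Primrec.list_take.comp hk hr)
  have ht : Primrec fun s : List Bool => (s.drop (s.idxOf false + 1)).drop (s.idxOf false) :=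
    Primrec.list_drop.comp hk hr
  exact (Primrec.list_take.comp hn ht).pair (Primrec.list_drop.comp hn ht)

section PairDecompressor

variable {D₁ D₂ : List Bool →. List Bool} {f : List Bool × List Bool → List Bool}

def pairDecompressor (D₁ D₂ : List Bool →. List Bool) (f : List Bool × List Bool → List Bool) :
    List Bool →. List Bool := fun s =>
  (D₁ (decodePair s).1).bind fun x => (D₂ (decodePair s).2).map fun y => f (x, y)

theorem Partrec.pairDecompressor (h₁ : Partrec D₁) (h₂ : Partrec D₂) (hf : Computable f) :
    Partrec (pairDecompressor D₁ D₂ f) := by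
  have hdec := primrec_decodePair.to_comp
  refine (h₁.comp (Computable.fst.comp hdec)).bind ?_
  exact ((h₂.comp (Computable.snd.comp (hdec.comp .fst))).map
    (hf.comp ((Computable.snd.comp .fst).pair .snd)).to₂).to₂

theorem mem_pairDecompressor_encodePair {x y p q : List Bool} (hx : x ∈ D₁ p) (hy : y ∈ D₂ q) :
    f (x, y) ∈ pairDecompressor D₁ D₂ f (encodePair p q) := by
  rw [pairDecompressor, decodePair_encodePair]
  exact Part.mem_bind hx (Part.mem_map _ hy)

theorem Kc_pairDecompressor_le {x y p q : List Bool} (hx : x ∈ D₁ p) (hy : y ∈ D₂ q) :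
    Kc (pairDecompressor D₁ D₂ f) (f (x, y)) ≤
      ((p.length + q.length + 2 * Nat.log 2 (p.length + 1) + 3 : ℕ) : ℕ∞) :=
  (Kc_le_length (mem_pairDecompressor_encodePair hx hy)).trans
    (by exact_mod_cast length_encodePair_le p q)

end PairDecompressor

theorem complexity_of_pairs_general
    (U : List Bool →. List Bool) (hU : OptimalDecompressor U)
    (pair : List Bool × List Bool → List Bool)
    (hpair : Computable pair) :
    ∃ c : ℕ, ∀ x y : List Bool,
      Kc U (pair (x, y)) ≤
        Kc U x + Kc U y +
          ((2 * Nat.log 2 ((Kc U x).toNat + 1) + c : ℕ) : ℕ∞) := by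
  obtain ⟨c, hc⟩ := hU.2 _ (hU.1.pairDecompressor hU.1 hpair)
  refine ⟨3 + c, fun x y => ?_⟩
  obtain ⟨p, hp, hpK⟩ := exists_mem_length_eq_Kc (hU.Kc_ne_top x)
  obtain ⟨q, hq, hqK⟩ := exists_mem_length_eq_Kc (hU.Kc_ne_top y)
  calc Kc U (pair (x, y)) ≤ Kc (pairDecompressor U U pair) (pair (x, y)) + c := hc _
    _ ≤ ((p.length + q.length + 2 * Nat.log 2 (p.length + 1) + 3 : ℕ) : ℕ∞) + c := by
        gcongr; exact Kc_pairDecompressor_le hp hq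
    _ = _ := by
        rw [← hpK, ← hqK, ENat.toNat_natCast]
        push_cast
        ring

/-- Complexity of pairs: `K(x, y) ≤ K(x) + 2 log₂(K(x)+1) + K(y) + c`, where
`K(x, y) = K([x, y])` for a fixed computable injective pairing `pair`.
(Optimality of `U` guarantees that `K` is everywhere finite, so the
natural-number value `(Kc U x).toNat` is the complexity `K(x)`.) -/
theorem complexity_of_pairs
    (U : List Bool →. List Bool) (hU : OptimalDecompressor U)
    (pair : List Bool × List Bool → List Bool)
    (hpair : Computable pair) (hinj : Function.Injective pair) :
    ∃ c : ℕ, ∀ x y : List Bool,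
      Kc U (pair (x, y)) ≤
        Kc U x + Kc U y +
          ((2 * Nat.log 2 ((Kc U x).toNat + 1) + c : ℕ) : ℕ∞) :=
  complexity_of_pairs_general U hU pair hpair
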